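/- arXiv:1603.01676 — 5 statements merged into one kernel-verified Lean document; each statement's English description precedes it below -/
import Mathlib

section
/- For every ε > 0 the function k_ε is twice continuously differentiable on ℝ; moreover its first derivative is given by k'_ε(r) = 2r for r < −ε, k'_ε(r) = −(2r³/ε² + 4r²/ε) for −ε ≤ r < 0, and k'_ε(r) = 0 for r ≥ 0, and its second derivative is given by k''_ε(r) = 2 for r < −ε, k''_ε(r) = −(6r²/ε² + 8r/ε) for −ε ≤ r < 0, and k''_ε(r) = 0 for r ≥ 0. -/
/-- The C²-regularization `k_ε` of the squared negative part. -/
noncomputable def kEps (ε : ℝ) : ℝ → ℝ := fun r =>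
  if r < -ε then r ^ 2 - ε ^ 2 / 6
  else if r < 0 then -(r ^ 3 / ε) * (r / (2 * ε) + 4 / 3)
  else 0

/-!
A function glued from two differentiable pieces whose values and derivatives agree at the
junction is differentiable, with the glued derivative. The pieces of `k_ε` match to first
order at both junctions, and so do the pieces of `k'_ε`; the pieces of `k''_ε` still match in
value, so `k''_ε` is continuous.
-/

open Set

section Gluing

variable {F : Type*} [NormedAddCommGroup F] [NormedSpace ℝ F]

theorem hasDerivAt_ite_lt {f g f' g' : ℝ → F} {a : ℝ}
    (hf : ∀ x, HasDerivAt f (f' x) x) (hg : ∀ x, HasDerivAt g (g' x) x)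
    (hfg : f a = g a) (hfg' : f' a = g' a) (x : ℝ) :
    HasDerivAt (fun y => if y < a then f y else g y) (if x < a then f' x else g' x) x := by
  rcases lt_trichotomy x a with hxa | rfl | hax
  · rw [if_pos hxa]
    refine (hf x).congr_of_eventuallyEq ?_
    filter_upwards [Iio_mem_nhds hxa] with y hy
    exact if_pos hy
  · rw [if_neg (lt_irrefl x), ← hasDerivWithinAt_univ, ← Iic_union_Ici]
    refine HasDerivWithinAt.union ?_ ?_
    · have hleft : ∀ y ∈ Iic x, (if y < x then f y else g y) = f y := fun y hy => by
        rcases (mem_Iic.mp hy).lt_or_eq with hyx | rfl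
        · exact if_pos hyx
        · exact (if_neg (lt_irrefl y)).trans hfg.symm
      exact hfg' ▸ (hf x).hasDerivWithinAt.congr_of_mem hleft self_mem_Iic
    · exact (hg x).hasDerivWithinAt.congr_of_mem (fun y hy => if_neg (not_lt.mpr hy)) self_mem_Ici
  · rw [if_neg hax.not_gt]
    refine (hg x).congr_of_eventuallyEq ?_
    filter_upwards [Ioi_mem_nhds hax] with y hy
    exact if_neg hy.not_gt

theorem contDiff_two_of_hasDerivAt {f f' f'' : ℝ → F} (hf : ∀ x, HasDerivAt f (f' x) x)
    (hf' : ∀ x, HasDerivAt f' (f'' x) x) (hf'' : Continuous f'') : ContDiff ℝ 2 f := by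
  have hderiv : deriv f = f' := funext fun x => (hf x).deriv
  rw [show (2 : WithTop ℕ∞) = 1 + 1 from rfl, contDiff_succ_iff_deriv, hderiv,
    contDiff_one_iff_deriv, funext fun x => (hf' x).deriv]
  exact ⟨fun x => (hf x).differentiableAt, by simp, fun x => (hf' x).differentiableAt, hf''⟩

end Gluing

theorem continuous_ite_lt {α β : Type*} [LinearOrder α] [TopologicalSpace α]
    [OrderClosedTopology α] [TopologicalSpace β] {f g : α → β} {a : α} (hf : Continuous f)
    (hg : Continuous g) (hfg : f a = g a) : Continuous fun y => if y < a then f y else g y :=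
  hf.if (fun x hx => by
    rwa [show x = a from frontier_lt_subset_eq (f := fun y => y) (g := fun _ => a)
      continuous_id continuous_const hx]) hg

noncomputable def kEpsDeriv (ε : ℝ) : ℝ → ℝ := fun r =>
  if r < -ε then 2 * r
  else if r < 0 then -(2 * r ^ 3 / ε ^ 2 + 4 * r ^ 2 / ε)
  else 0

noncomputable def kEpsDeriv2 (ε : ℝ) : ℝ → ℝ := fun r =>
  if r < -ε then 2
  else if r < 0 then -(6 * r ^ 2 / ε ^ 2 + 8 * r / ε)
  else 0

variable {ε : ℝ}

theorem hasDerivAt_kEps (hε : 0 < ε) (r : ℝ) : HasDerivAt (kEps ε) (kEpsDeriv ε r) r := by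
  have hε0 : ε ≠ 0 := hε.ne'
  have hleft (x : ℝ) : HasDerivAt (fun y => y ^ 2 - ε ^ 2 / 6) (2 * x) x := by
    simpa using (hasDerivAt_pow 2 x).sub_const (ε ^ 2 / 6)
  have hmid (x : ℝ) : HasDerivAt (fun y => -(y ^ 3 / ε) * (y / (2 * ε) + 4 / 3))
      (-(2 * x ^ 3 / ε ^ 2 + 4 * x ^ 2 / ε)) x := by
    refine (((hasDerivAt_pow 3 x).div_const ε).neg.mul
      (((hasDerivAt_id x).div_const (2 * ε)).add_const (4 / 3))).congr_deriv ?_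
    simp only [Pi.neg_apply, id]
    field_simp
    ring
  have hright :=
    hasDerivAt_ite_lt (a := 0) hmid (fun x => hasDerivAt_const x (0 : ℝ)) (by simp) (by simp)
  refine hasDerivAt_ite_lt hleft hright ?_ ?_ r
  all_goals
    simp only [neg_lt_zero.mpr hε, if_true]
    field_simp
    ring

theorem hasDerivAt_kEpsDeriv (hε : 0 < ε) (r : ℝ) :
    HasDerivAt (kEpsDeriv ε) (kEpsDeriv2 ε r) r := by
  have hε0 : ε ≠ 0 := hε.ne'
  have hleft (x : ℝ) : HasDerivAt (fun y => 2 * y) 2 x := by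
    simpa using (hasDerivAt_id x).const_mul (2 : ℝ)
  have hmid (x : ℝ) : HasDerivAt (fun y => -(2 * y ^ 3 / ε ^ 2 + 4 * y ^ 2 / ε))
      (-(6 * x ^ 2 / ε ^ 2 + 8 * x / ε)) x := by
    refine ((((hasDerivAt_pow 3 x).const_mul 2).div_const (ε ^ 2)).add
      (((hasDerivAt_pow 2 x).const_mul 4).div_const ε)).neg.congr_deriv ?_
    push_cast
    ring
  have hright :=
    hasDerivAt_ite_lt (a := 0) hmid (fun x => hasDerivAt_const x (0 : ℝ)) (by simp) (by simp)
  refine hasDerivAt_ite_lt hleft hright ?_ ?_ r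
  all_goals
    simp only [neg_lt_zero.mpr hε, if_true]
    field_simp
    ring

theorem continuous_kEpsDeriv2 (hε : 0 < ε) : Continuous (kEpsDeriv2 ε) := by
  have hε0 : ε ≠ 0 := hε.ne'
  have hright : Continuous fun y : ℝ => if y < 0 then -(6 * y ^ 2 / ε ^ 2 + 8 * y / ε) else 0 :=
    continuous_ite_lt (by fun_prop) continuous_const (by simp)
  refine continuous_ite_lt continuous_const hright ?_
  simp only [neg_lt_zero.mpr hε, if_true]
  field_simp
  ring

theorem kEps_contDiff_and_derivs (ε : ℝ) (hε : 0 < ε) :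
    ContDiff ℝ 2 (kEps ε) ∧
    (∀ r : ℝ, deriv (kEps ε) r =
      if r < -ε then 2 * r
      else if r < 0 then -(2 * r ^ 3 / ε ^ 2 + 4 * r ^ 2 / ε)
      else 0) ∧
    (∀ r : ℝ, deriv (deriv (kEps ε)) r =
      if r < -ε then 2
      else if r < 0 then -(6 * r ^ 2 / ε ^ 2 + 8 * r / ε)
      else 0) := by
  have hderiv : deriv (kEps ε) = kEpsDeriv ε := funext fun r => (hasDerivAt_kEps hε r).deriv
  have hderiv2 : deriv (kEpsDeriv ε) = kEpsDeriv2 ε :=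
    funext fun r => (hasDerivAt_kEpsDeriv hε r).deriv
  refine ⟨contDiff_two_of_hasDerivAt (hasDerivAt_kEps hε) (hasDerivAt_kEpsDeriv hε)
    (continuous_kEpsDeriv2 hε), fun r => ?_, fun r => ?_⟩
  · rw [hderiv, kEpsDeriv]
  · rw [hderiv, hderiv2, kEpsDeriv2]
end

section
/- Let β > 1, a₁ > 0, a₂ ∈ ℝ and λ₁ ∈ ℝ with λ₁ ≥ a₂, and let T > 0. Suppose ξ : [0, T] → ℝ is differentiable with ξ(0) = ξ₀ > ((λ₁ − a₂)/a₁)^{1/(β−1)} and ξ'(t) ≥ −λ₁ ξ(t) + a₁ ξ(t)^β + a₂ ξ(t) for all t ∈ [0, T]. Then the improper integral ∫_{ξ₀}^{∞} ds/(a₁ s^β − (λ₁ − a₂)s) is finite and T ≤ ∫_{ξ₀}^{∞} ds/(a₁ s^β − (λ₁ − a₂)s). In particular, no such ξ can exist on [0, T] once T exceeds this integral. -/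
open MeasureTheory

theorem blowup_time_bound_subcritical (β a₁ a₂ l₁ T ξ₀ : ℝ)
    (hβ : 1 < β) (ha₁ : 0 < a₁) (hl : a₂ ≤ l₁) (hT : 0 < T)
    (ξ ξ' : ℝ → ℝ) (hξ0 : ξ 0 = ξ₀)
    (hξ₀ : ((l₁ - a₂) / a₁) ^ (1 / (β - 1)) < ξ₀)
    (hderiv : ∀ t ∈ Set.Icc (0:ℝ) T, HasDerivAt ξ (ξ' t) t)
    (hineq : ∀ t ∈ Set.Icc (0:ℝ) T,
      -l₁ * ξ t + a₁ * ξ t ^ β + a₂ * ξ t ≤ ξ' t) :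
    IntegrableOn (fun s => 1 / (a₁ * s ^ β - (l₁ - a₂) * s)) (Set.Ioi ξ₀) ∧
    T ≤ ∫ s in Set.Ioi ξ₀, 1 / (a₁ * s ^ β - (l₁ - a₂) * s) := by
  open Set in
  set c : ℝ := l₁ - a₂ with hcdef
  have hc0 : 0 ≤ c := sub_nonneg.2 hl
  set ρ₀ : ℝ := (c / a₁) ^ (1 / (β - 1)) with hρ₀def
  have hβ1 : 0 < β - 1 := by linarith
  have hρ₀nn : 0 ≤ ρ₀ := Real.rpow_nonneg (div_nonneg hc0 ha₁.le) _
  have hξ₀pos : 0 < ξ₀ := lt_of_le_of_lt hρ₀nn hξ₀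
  -- key : for x > ρ₀, c < a₁ * x ^ (β - 1)
  have hkey : ∀ x : ℝ, ρ₀ < x → c < a₁ * x ^ (β - 1) := by
    intro x hx
    have h1 : ρ₀ ^ (β - 1) = c / a₁ := by
      rw [hρ₀def, ← Real.rpow_mul (div_nonneg hc0 ha₁.le), one_div,
        inv_mul_cancel₀ (ne_of_gt hβ1), Real.rpow_one]
    have h2 : c / a₁ < x ^ (β - 1) := by
      rw [← h1]; exact Real.rpow_lt_rpow hρ₀nn hx hβ1
    rw [div_lt_iff₀ ha₁] at h2
    linarith [h2]
  have hrpow_split : ∀ x : ℝ, 0 < x → x ^ β = x ^ (β - 1) * x := by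
    intro x hx0
    nth_rewrite 1 [show β = (β - 1) + 1 by ring]
    rw [Real.rpow_add hx0, Real.rpow_one]
  have hdenpos : ∀ x : ℝ, ρ₀ < x → 0 < a₁ * x ^ β - c * x := by
    intro x hx
    have hx0 : 0 < x := lt_of_le_of_lt hρ₀nn hx
    have h3 := hkey x hx
    have h4 := hrpow_split x hx0
    nlinarith [h3, hx0]
  set ρ : ℝ := (ρ₀ + ξ₀) / 2 with hρdef
  have hρ1 : ρ₀ < ρ := by simp only [hρdef]; linarith
  have hρ2 : ρ < ξ₀ := by simp only [hρdef]; linarith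
  -- continuity of ξ on [0, T]
  have hξcont : ContinuousOn ξ (Icc 0 T) := fun t ht =>
    (hderiv t ht).continuousAt.continuousWithinAt
  have hineq' : ∀ t ∈ Icc (0:ℝ) T, a₁ * ξ t ^ β - c * ξ t ≤ ξ' t := by
    intro t ht
    have := hineq t ht
    simp only [hcdef]
    linarith
  -- Step 1 : ξ stays above ρ
  have hlow : ∀ t ∈ Icc (0:ℝ) T, ρ < ξ t := by
    by_contra h
    push_neg at h
    obtain ⟨t₀, ht₀, hle⟩ := h
    set B : Set ℝ := Icc 0 T ∩ ξ ⁻¹' (Iic ρ) with hBdef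
    have hBne : B.Nonempty := ⟨t₀, ht₀, hle⟩
    have hBclosed : IsClosed B :=
      hξcont.preimage_isClosed_of_isClosed isClosed_Icc isClosed_Iic
    have hBcomp : IsCompact B :=
      isCompact_Icc.of_isClosed_subset hBclosed inter_subset_left
    set t₁ : ℝ := sInf B with ht₁def
    have ht₁B : t₁ ∈ B := hBcomp.sInf_mem hBne
    have ht₁Icc : t₁ ∈ Icc (0:ℝ) T := ht₁B.1
    have ht₁le : ξ t₁ ≤ ρ := ht₁B.2
    have ht₁pos : 0 < t₁ := by
      rcases lt_or_eq_of_le ht₁Icc.1 with h | h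
      · exact h
      · exfalso; rw [← h, hξ0] at ht₁le; linarith
    have hBbdd : BddBelow B := hBcomp.bddBelow
    have hnotB : ∀ u : ℝ, 0 ≤ u → u < t₁ → ρ < ξ u := by
      intro u hu0 hut
      by_contra hcon
      push_neg at hcon
      have : u ∈ B := ⟨⟨hu0, le_trans hut.le ht₁Icc.2⟩, hcon⟩
      exact absurd (csInf_le hBbdd this) (not_le.2 hut)
    have hsub : Icc (0:ℝ) t₁ ⊆ Icc 0 T := Icc_subset_Icc le_rfl ht₁Icc.2
    have hmono : MonotoneOn ξ (Icc 0 t₁) := by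
      apply monotoneOn_of_deriv_nonneg (convex_Icc 0 t₁) (hξcont.mono hsub)
      · intro u hu
        rw [interior_Icc] at hu
        exact ((hderiv u (hsub ⟨hu.1.le, hu.2.le⟩)).differentiableAt).differentiableWithinAt
      · intro u hu
        rw [interior_Icc] at hu
        have huIcc : u ∈ Icc (0:ℝ) T := hsub ⟨hu.1.le, hu.2.le⟩
        rw [(hderiv u huIcc).deriv]
        have hρu : ρ₀ < ξ u := lt_trans hρ1 (hnotB u hu.1.le hu.2)
        exact le_trans (hdenpos (ξ u) hρu).le (hineq' u huIcc)
    have : ξ 0 ≤ ξ t₁ :=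
      hmono ⟨le_rfl, ht₁pos.le⟩ ⟨ht₁pos.le, le_rfl⟩ ht₁pos.le
    rw [hξ0] at this
    linarith
  -- Step 2 : ξ is monotone on [0, T], hence ξ t ≥ ξ₀
  have hmonoT : MonotoneOn ξ (Icc 0 T) := by
    apply monotoneOn_of_deriv_nonneg (convex_Icc 0 T) hξcont
    · intro u hu
      rw [interior_Icc] at hu
      exact ((hderiv u ⟨hu.1.le, hu.2.le⟩).differentiableAt).differentiableWithinAt
    · intro u hu
      rw [interior_Icc] at hu
      have huIcc : u ∈ Icc (0:ℝ) T := ⟨hu.1.le, hu.2.le⟩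
      rw [(hderiv u huIcc).deriv]
      have hρu : ρ₀ < ξ u := lt_trans hρ1 (hlow u huIcc)
      exact le_trans (hdenpos (ξ u) hρu).le (hineq' u huIcc)
  have hge : ∀ t ∈ Icc (0:ℝ) T, ξ₀ ≤ ξ t := by
    intro t ht
    have := hmonoT ⟨le_rfl, hT.le⟩ ht ht.1
    rw [hξ0] at this
    exact this
  -- the integrand
  set f : ℝ → ℝ := fun s => 1 / (a₁ * s ^ β - c * s) with hfdef
  have hfc : ∀ x : ℝ, ρ₀ < x → ContinuousAt f x := by
    intro x hx
    have hx0 : 0 < x := lt_of_le_of_lt hρ₀nn hx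
    have hd : ContinuousAt (fun s : ℝ => a₁ * s ^ β - c * s) x := by
      exact ((continuousAt_const.mul
        (Real.continuousAt_rpow_const x β (Or.inl hx0.ne'))).sub
        (continuousAt_const.mul continuousAt_id))
    exact continuousAt_const.div hd (ne_of_gt (hdenpos x hx))
  have hfcOn : ContinuousOn f (Ioi ρ₀) := fun x hx => (hfc x hx).continuousWithinAt
  have hfpos : ∀ x : ℝ, ρ₀ < x → 0 < f x := fun x hx =>
    div_pos one_pos (hdenpos x hx)
  -- Integrability
  have hδkey := hkey ξ₀ hξ₀
  set Q : ℝ := ξ₀ ^ (β - 1) with hQdef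
  have hQpos : 0 < Q := Real.rpow_pos_of_pos hξ₀pos _
  set δ : ℝ := a₁ - c / Q with hδdef
  have hδpos : 0 < δ := by
    have : c / Q < a₁ := (div_lt_iff₀ hQpos).2 (by nlinarith [hδkey])
    simp only [hδdef]; linarith
  have hbound : ∀ s : ℝ, ξ₀ < s → δ * s ^ β ≤ a₁ * s ^ β - c * s := by
    intro s hs
    have hs0 : 0 < s := lt_trans hξ₀pos hs
    have hPQ : Q ≤ s ^ (β - 1) := by
      rw [hQdef]
      exact Real.rpow_le_rpow hξ₀pos.le hs.le hβ1.le
    have hsplit := hrpow_split s hs0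
    have hcQ : c / Q * Q = c := div_mul_cancel₀ c hQpos.ne'
    have hc' : 0 ≤ c / Q := div_nonneg hc0 hQpos.le
    have h5 : c * s ≤ c / Q * s ^ β := by
      rw [hsplit]
      nlinarith [mul_le_mul_of_nonneg_left hPQ hc', hs0.le]
    simp only [hδdef]
    nlinarith [h5]
  have hInt : IntegrableOn f (Ioi ξ₀) := by
    have hg : IntegrableOn (fun s : ℝ => δ⁻¹ * s ^ (-β)) (Ioi ξ₀) :=
      (integrableOn_Ioi_rpow_of_lt (by linarith : -β < -1) hξ₀pos).const_mul δ⁻¹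
    refine Integrable.mono hg
      ((hfcOn.mono fun x hx => lt_trans hξ₀ hx).aestronglyMeasurable
        measurableSet_Ioi) ?_
    rw [ae_restrict_iff' measurableSet_Ioi]
    filter_upwards with s hs
    have hs0 : 0 < s := lt_trans hξ₀pos hs
    have hds : 0 < a₁ * s ^ β - c * s := hdenpos s (lt_trans hξ₀ hs)
    have hfs : 0 < f s := hfpos s (lt_trans hξ₀ hs)
    have hgb : 0 < δ * s ^ β := mul_pos hδpos (Real.rpow_pos_of_pos hs0 _)
    have h6 : f s ≤ δ⁻¹ * s ^ (-β) := by
      calc f s ≤ 1 / (δ * s ^ β) := one_div_le_one_div_of_le hgb (hbound s hs)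
        _ = δ⁻¹ * s ^ (-β) := by rw [Real.rpow_neg hs0.le, one_div, mul_inv]
    rw [Real.norm_eq_abs, Real.norm_eq_abs, abs_of_pos hfs,
      abs_of_pos (by positivity : (0:ℝ) < δ⁻¹ * s ^ (-β))]
    exact h6
  constructor
  · exact hInt
  -- Step 3 : comparison via FTC
  have hFd : ∀ x : ℝ, ξ₀ ≤ x → HasDerivAt (fun u => ∫ s in ξ₀..u, f s) (f x) x := by
    intro x hx
    have hxρ : ρ₀ < x := lt_of_lt_of_le hξ₀ hx
    have hII : IntervalIntegrable f volume ξ₀ x := by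
      apply ContinuousOn.intervalIntegrable
      apply hfcOn.mono
      rw [Set.uIcc_of_le hx]
      intro y hy
      exact lt_of_lt_of_le hξ₀ hy.1
    exact intervalIntegral.integral_hasDerivAt_right hII
      (hfcOn.stronglyMeasurableAtFilter isOpen_Ioi x hxρ) (hfc x hxρ)
  set F : ℝ → ℝ := fun u => ∫ s in ξ₀..u, f s with hFdef
  set G : ℝ → ℝ := fun t => F (ξ t) - t with hGdef
  have hGd : ∀ t ∈ Icc (0:ℝ) T, HasDerivAt G (f (ξ t) * ξ' t - 1) t := by
    intro t ht
    have h1 : HasDerivAt (F ∘ ξ) (f (ξ t) * ξ' t) t :=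
      (hFd (ξ t) (hge t ht)).comp t (hderiv t ht)
    exact h1.sub (hasDerivAt_id t)
  have hGmono : MonotoneOn G (Icc 0 T) := by
    apply monotoneOn_of_deriv_nonneg (convex_Icc 0 T)
      (fun t ht => (hGd t ht).continuousAt.continuousWithinAt)
    · intro u hu
      rw [interior_Icc] at hu
      exact ((hGd u ⟨hu.1.le, hu.2.le⟩).differentiableAt).differentiableWithinAt
    · intro u hu
      rw [interior_Icc] at hu
      have huIcc : u ∈ Icc (0:ℝ) T := ⟨hu.1.le, hu.2.le⟩
      rw [(hGd u huIcc).deriv]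
      have hρu : ρ₀ < ξ u := lt_of_lt_of_le hξ₀ (hge u huIcc)
      have hdu : 0 < a₁ * ξ u ^ β - c * ξ u := hdenpos _ hρu
      have hfu : 0 < f (ξ u) := hfpos _ hρu
      have h2 : f (ξ u) * (a₁ * ξ u ^ β - c * ξ u) ≤ f (ξ u) * ξ' u :=
        mul_le_mul_of_nonneg_left (hineq' u huIcc) hfu.le
      have h3 : f (ξ u) * (a₁ * ξ u ^ β - c * ξ u) = 1 := by
        rw [hfdef]
        field_simp
      linarith
  have hG0 : G 0 = 0 := by
    simp only [hGdef, hFdef, hξ0, intervalIntegral.integral_same, sub_zero]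
  have hGT : (0:ℝ) ≤ G T := by
    rw [← hG0]
    exact hGmono ⟨le_rfl, hT.le⟩ ⟨hT.le, le_rfl⟩ hT.le
  have hTle : T ≤ ∫ s in Set.Ioc ξ₀ (ξ T), f s := by
    have h7 : T ≤ ∫ s in ξ₀..ξ T, f s := by
      have h8 := hGT
      simp only [hGdef, hFdef] at h8
      linarith
    rwa [intervalIntegral.integral_of_le (hge T ⟨hT.le, le_rfl⟩)] at h7
  refine le_trans hTle (setIntegral_mono_set hInt ?_ ?_)
  · have h9 : ∀ᵐ s ∂(volume.restrict (Set.Ioi ξ₀)), 0 ≤ f s := by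
      rw [ae_restrict_iff' measurableSet_Ioi]
      filter_upwards with s hs
      exact (hfpos s (lt_trans hξ₀ hs)).le
    exact h9
  · exact Filter.Eventually.of_forall fun s hs => hs.1
end

section
/- Let β > 1, a₁ > 0, a₂ ∈ ℝ and λ₁ ∈ ℝ with λ₁ < a₂, and let T > 0. Suppose ξ : [0, T] → ℝ is differentiable with ξ(0) = ξ₀ > 0 and ξ'(t) ≥ −λ₁ ξ(t) + a₁ ξ(t)^β + a₂ ξ(t) for all t ∈ [0, T]. Then T ≤ ∫_{ξ₀}^{∞} ds/(a₁ s^β) = ξ₀^{1−β}/(a₁(β−1)). In particular, no such ξ can exist on [0, T] once T exceeds ξ₀^{1−β}/(a₁(β−1)). -/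
open MeasureTheory

theorem blowup_time_bound_supercritical (β a₁ a₂ l₁ T ξ₀ : ℝ)
    (hβ : 1 < β) (ha₁ : 0 < a₁) (hl : l₁ < a₂) (hT : 0 < T)
    (ξ ξ' : ℝ → ℝ) (hξ0 : ξ 0 = ξ₀) (hξ₀ : 0 < ξ₀)
    (hderiv : ∀ t ∈ Set.Icc (0:ℝ) T, HasDerivAt ξ (ξ' t) t)
    (hineq : ∀ t ∈ Set.Icc (0:ℝ) T,
      -l₁ * ξ t + a₁ * ξ t ^ β + a₂ * ξ t ≤ ξ' t) :
    (∫ s in Set.Ioi ξ₀, 1 / (a₁ * s ^ β)) = ξ₀ ^ (1 - β) / (a₁ * (β - 1)) ∧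
    T ≤ ξ₀ ^ (1 - β) / (a₁ * (β - 1)) := by
  have hβ1 : (0:ℝ) < β - 1 := by linarith
  constructor
  · have h1 : ∀ s ∈ Set.Ioi ξ₀, 1 / (a₁ * s ^ β) = a₁⁻¹ * s ^ (-β) := by
      intro s hs
      have hs0 : (0:ℝ) < s := lt_trans hξ₀ hs
      rw [Real.rpow_neg hs0.le]
      field_simp
    rw [setIntegral_congr_fun measurableSet_Ioi h1, integral_const_mul,
      integral_Ioi_rpow_of_lt (by linarith) hξ₀]
    have hne : (1:ℝ) - β ≠ 0 := by linarith
    have hne2 : β - 1 ≠ 0 := by linarith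
    rw [show -β + 1 = 1 - β by ring]
    field_simp
    ring
  · -- positivity of ξ on [0,T]
    have hcont : ContinuousOn ξ (Set.Icc 0 T) := fun t ht =>
      (hderiv t ht).continuousAt.continuousWithinAt
    have hpos : ∀ t ∈ Set.Icc (0:ℝ) T, 0 < ξ t := by
      by_contra h
      push_neg at h
      obtain ⟨t₀, ht₀, ht₀le⟩ := h
      set A : Set ℝ := Set.Icc 0 T ∩ ξ ⁻¹' Set.Iic 0 with hA
      have hAne : A.Nonempty := ⟨t₀, ht₀, ht₀le⟩
      have hAcl : IsClosed A :=
        hcont.preimage_isClosed_of_isClosed isClosed_Icc isClosed_Iic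
      have hAbdd : BddBelow A := ⟨0, fun x hx => hx.1.1⟩
      set c := sInf A with hc
      have hcA : c ∈ A := hAcl.csInf_mem hAne hAbdd
      have hcIcc : c ∈ Set.Icc (0:ℝ) T := hcA.1
      have hc0 : 0 < c := by
        rcases lt_or_eq_of_le hcIcc.1 with h | h
        · exact h
        · exfalso
          have h2 := hcA.2
          rw [← h] at h2
          simp only [Set.mem_preimage, Set.mem_Iic, hξ0] at h2
          linarith
      have hlt : ∀ s ∈ Set.Ico (0:ℝ) c, 0 < ξ s := by
        intro s hs
        by_contra hsle
        push_neg at hsle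
        have : s ∈ A := ⟨⟨hs.1, le_trans hs.2.le hcIcc.2⟩, hsle⟩
        exact absurd (csInf_le hAbdd this) (not_le.mpr hs.2)
      have hmono : StrictMonoOn ξ (Set.Icc 0 c) := by
        apply strictMonoOn_of_deriv_pos (convex_Icc 0 c)
          (hcont.mono (Set.Icc_subset_Icc le_rfl hcIcc.2))
        intro x hx
        rw [interior_Icc] at hx
        have hxIcc : x ∈ Set.Icc (0:ℝ) T :=
          ⟨hx.1.le, le_trans hx.2.le hcIcc.2⟩
        rw [(hderiv x hxIcc).deriv]
        have hxpos : 0 < ξ x := hlt x ⟨hx.1.le, hx.2⟩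
        have h1 := hineq x hxIcc
        have h2 : 0 < ξ x ^ β := Real.rpow_pos_of_pos hxpos β
        nlinarith
      have : ξ 0 < ξ c := hmono ⟨le_rfl, hc0.le⟩ ⟨hc0.le, le_rfl⟩ hc0
      rw [hξ0] at this
      have := hcA.2
      simp only [Set.mem_preimage, Set.mem_Iic] at this
      linarith
    -- the key bound via G t = ξ t ^ (1-β) / (a₁ (β-1)) + t
    set c : ℝ := 1 / (a₁ * (β - 1)) with hcdef
    have hcpos : 0 < c := by positivity
    set G : ℝ → ℝ := fun t => ξ t ^ (1 - β) * c + t with hG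
    have hGd : ∀ t ∈ Set.Icc (0:ℝ) T,
        HasDerivAt G (ξ' t * (1 - β) * ξ t ^ (1 - β - 1) * c + 1) t := by
      intro t ht
      exact (((hderiv t ht).rpow_const (Or.inl (hpos t ht).ne')).mul_const c).add
        (hasDerivAt_id t)
    have hGcont : ContinuousOn G (Set.Icc 0 T) := fun t ht =>
      (hGd t ht).continuousAt.continuousWithinAt
    have hanti : AntitoneOn G (Set.Icc 0 T) := by
      apply antitoneOn_of_deriv_nonpos (convex_Icc 0 T) hGcont
      · intro x hx
        rw [interior_Icc] at hx
        exact ((hGd x ⟨hx.1.le, hx.2.le⟩).differentiableAt).differentiableWithinAt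
      · intro x hx
        rw [interior_Icc] at hx
        have hxIcc : x ∈ Set.Icc (0:ℝ) T := ⟨hx.1.le, hx.2.le⟩
        rw [(hGd x hxIcc).deriv]
        have hxpos : 0 < ξ x := hpos x hxIcc
        have hξ'bd : a₁ * ξ x ^ β ≤ ξ' x := by
          have h1 := hineq x hxIcc
          nlinarith
        have hmul : ξ x ^ β * ξ x ^ (1 - β - 1) = 1 := by
          rw [← Real.rpow_add hxpos]
          norm_num
        have hpow : 0 < ξ x ^ (1 - β - 1) := Real.rpow_pos_of_pos hxpos _
        have key : a₁ * ξ x ^ β * (β - 1) * ξ x ^ (1 - β - 1) * c ≤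
            ξ' x * (β - 1) * ξ x ^ (1 - β - 1) * c := by
          have := mul_le_mul_of_nonneg_right hξ'bd
            (le_of_lt (by positivity : (0:ℝ) < (β - 1) * ξ x ^ (1 - β - 1) * c))
          nlinarith
        have heq : a₁ * ξ x ^ β * (β - 1) * ξ x ^ (1 - β - 1) * c = 1 := by
          calc a₁ * ξ x ^ β * (β - 1) * ξ x ^ (1 - β - 1) * c
              = (ξ x ^ β * ξ x ^ (1 - β - 1)) * (a₁ * (β - 1) * c) := by ring
            _ = 1 := by rw [hmul, hcdef]; field_simp
        nlinarith [key, heq]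
    have hGT : G T ≤ G 0 := hanti (Set.left_mem_Icc.mpr hT.le)
      (Set.right_mem_Icc.mpr hT.le) hT.le
    have hFT : 0 ≤ ξ T ^ (1 - β) * c := by
      have := hpos T (Set.right_mem_Icc.mpr hT.le)
      positivity
    have hG0 : G 0 = ξ₀ ^ (1 - β) * c := by simp [hG, hξ0]
    have : T ≤ ξ₀ ^ (1 - β) * c := by
      have := hGT
      simp only [hG] at this
      rw [hξ0] at this
      linarith
    calc T ≤ ξ₀ ^ (1 - β) * c := this
      _ = ξ₀ ^ (1 - β) / (a₁ * (β - 1)) := by rw [hcdef]; ring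
end

section
/- Let β > 1, a₁ > 0, a₂ ∈ ℝ and λ₁ ∈ ℝ with λ₁ ≥ a₂, and let T > 0. Suppose ξ : [0, T] → ℝ is differentiable with ξ(0) = ξ₀ > ((λ₁ − a₂)/a₁)^{1/(β−1)} and ξ'(t) ≥ −λ₁ ξ(t) + a₁ ξ(t)^β + a₂ ξ(t) for all t ∈ [0, T]. Then ξ(t) > ((λ₁ − a₂)/a₁)^{1/(β−1)} for all t ∈ [0, T] and ξ is strictly increasing on [0, T]. -/
theorem solution_strictly_increasing (β a₁ a₂ l₁ T ξ₀ : ℝ)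
    (hβ : 1 < β) (ha₁ : 0 < a₁) (hl : a₂ ≤ l₁) (hT : 0 < T)
    (ξ ξ' : ℝ → ℝ) (hξ0 : ξ 0 = ξ₀)
    (hξ₀ : ((l₁ - a₂) / a₁) ^ (1 / (β - 1)) < ξ₀)
    (hderiv : ∀ t ∈ Set.Icc (0:ℝ) T, HasDerivAt ξ (ξ' t) t)
    (hineq : ∀ t ∈ Set.Icc (0:ℝ) T,
      -l₁ * ξ t + a₁ * ξ t ^ β + a₂ * ξ t ≤ ξ' t) :
    (∀ t ∈ Set.Icc (0:ℝ) T, ((l₁ - a₂) / a₁) ^ (1 / (β - 1)) < ξ t) ∧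
    StrictMonoOn ξ (Set.Icc (0:ℝ) T) := by
  set c : ℝ := ((l₁ - a₂) / a₁) ^ (1 / (β - 1)) with hc
  have hb1 : (0:ℝ) < β - 1 := by linarith
  have hr : 0 ≤ (l₁ - a₂) / a₁ := div_nonneg (by linarith) ha₁.le
  have hc0 : 0 ≤ c := Real.rpow_nonneg hr _
  have hcpow : c ^ (β - 1) = (l₁ - a₂) / a₁ := by
    rw [hc, one_div, Real.rpow_inv_rpow hr hb1.ne']
  -- positivity of the derivative above the barrier
  have hpos : ∀ t ∈ Set.Icc (0:ℝ) T, c < ξ t → 0 < ξ' t := by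
    intro t ht hct
    have hx : 0 < ξ t := lt_of_le_of_lt hc0 hct
    have h1 : (l₁ - a₂) / a₁ < (ξ t) ^ (β - 1) := by
      rw [← hcpow]; exact Real.rpow_lt_rpow hc0 hct hb1
    have h2 : l₁ - a₂ < a₁ * (ξ t) ^ (β - 1) := by
      rwa [div_lt_iff₀' ha₁] at h1
    have h3 : (l₁ - a₂) * ξ t < a₁ * (ξ t) ^ (β - 1) * ξ t :=
      mul_lt_mul_of_pos_right h2 hx
    have hpow : (ξ t) ^ β = (ξ t) ^ (β - 1) * ξ t := by
      rw [show β = (β - 1) + 1 by ring, Real.rpow_add hx, Real.rpow_one]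
      ring_nf
    have h4 := hineq t ht
    rw [hpow] at h4
    nlinarith
  -- the barrier is never crossed
  have key : ∀ t ∈ Set.Icc (0:ℝ) T, c < ξ t := by
    by_contra h
    push_neg at h
    obtain ⟨t₁, ht₁, hle⟩ := h
    set A : Set ℝ := {t | t ∈ Set.Icc (0:ℝ) T ∧ ξ t ≤ c} with hA
    have hAne : A.Nonempty := ⟨t₁, ht₁, hle⟩
    have hbdd : BddBelow A := ⟨0, fun x hx => hx.1.1⟩
    set t₀ : ℝ := sInf A with ht₀
    have ht₀mem : t₀ ∈ Set.Icc (0:ℝ) T :=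
      ⟨le_csInf hAne fun x hx => hx.1.1,
        le_trans (csInf_le hbdd ⟨ht₁, hle⟩) ht₁.2⟩
    have hcont : ContinuousAt ξ t₀ := (hderiv t₀ ht₀mem).continuousAt
    have hξt₀ : ξ t₀ ≤ c := by
      obtain ⟨u, -, hu_tendsto, hu_mem⟩ := exists_seq_tendsto_sInf hAne hbdd
      have : Filter.Tendsto (fun n => ξ (u n)) Filter.atTop (nhds (ξ t₀)) :=
        (hcont.tendsto).comp hu_tendsto
      exact le_of_tendsto this (Filter.Eventually.of_forall fun n => (hu_mem n).2)
    have ht₀pos : 0 < t₀ := by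
      rcases lt_or_eq_of_le ht₀mem.1 with h | h
      · exact h
      · exfalso
        rw [← h] at hξt₀
        rw [hξ0] at hξt₀
        linarith
    -- on [0, t₀), ξ stays above c
    have habove : ∀ s, 0 ≤ s → s < t₀ → c < ξ s := by
      intro s hs0 hst
      by_contra hsc
      push_neg at hsc
      have hsA : s ∈ A := ⟨⟨hs0, le_trans hst.le ht₀mem.2⟩, hsc⟩
      exact absurd (csInf_le hbdd hsA) (not_le.mpr hst)
    -- ξ is strictly monotone on [0, t₀]
    have hmono : StrictMonoOn ξ (Set.Icc (0:ℝ) t₀) := by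
      apply strictMonoOn_of_deriv_pos (convex_Icc _ _)
      · intro x hx
        exact ((hderiv x ⟨hx.1, le_trans hx.2 ht₀mem.2⟩).continuousAt).continuousWithinAt
      · intro x hx
        rw [interior_Icc] at hx
        have hxT : x ∈ Set.Icc (0:ℝ) T := ⟨hx.1.le, le_trans hx.2.le ht₀mem.2⟩
        rw [(hderiv x hxT).deriv]
        exact hpos x hxT (habove x hx.1.le hx.2)
    have : ξ 0 < ξ t₀ :=
      hmono ⟨le_refl 0, ht₀pos.le⟩ ⟨ht₀pos.le, le_refl t₀⟩ ht₀pos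
    rw [hξ0] at this
    linarith
  refine ⟨key, ?_⟩
  apply strictMonoOn_of_deriv_pos (convex_Icc _ _)
  · intro x hx
    exact ((hderiv x hx).continuousAt).continuousWithinAt
  · intro x hx
    rw [interior_Icc] at hx
    have hxT : x ∈ Set.Icc (0:ℝ) T := ⟨hx.1.le, hx.2.le⟩
    rw [(hderiv x hxT).deriv]
    exact hpos x hxT (key x hxT)
end

section
/- Let λ₁ ∈ ℝ, κ > 0, and let G, K : [0, ∞) → [0, ∞) be continuous functions. Let M > 0 be such that κ G(u) + K(u) > 2λ₁ u for all u > M and ∫_M^{∞} du/(κ G(u) + K(u) − 2λ₁ u) < ∞. Let T > 0 and suppose η : [0, T] → ℝ is differentiable with η(0) > M and η'(t) ≥ −2λ₁ η(t) + κ G(η(t)) + K(η(t)) for all t ∈ [0, T]. Then T ≤ ∫_M^{∞} du/(κ G(u) + K(u) − 2λ₁ u). In particular, no such η can exist on [0, T] once T exceeds this integral. -/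
open MeasureTheory

theorem noise_induced_blowup_time_bound (l₁ κ : ℝ) (hκ : 0 < κ)
    (G K : ℝ → ℝ) (hGc : ContinuousOn G (Set.Ici 0))
    (hKc : ContinuousOn K (Set.Ici 0))
    (hGnn : ∀ u ≥ (0:ℝ), 0 ≤ G u) (hKnn : ∀ u ≥ (0:ℝ), 0 ≤ K u)
    (M : ℝ) (hM : 0 < M)
    (hgrow : ∀ u > M, 2 * l₁ * u < κ * G u + K u)
    (hint : IntegrableOn (fun u => 1 / (κ * G u + K u - 2 * l₁ * u)) (Set.Ioi M))
    (T : ℝ) (hT : 0 < T) (η η' : ℝ → ℝ) (hη0 : M < η 0)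
    (hderiv : ∀ t ∈ Set.Icc (0:ℝ) T, HasDerivAt η (η' t) t)
    (hineq : ∀ t ∈ Set.Icc (0:ℝ) T,
      -2 * l₁ * η t + κ * G (η t) + K (η t) ≤ η' t) :
    T ≤ ∫ u in Set.Ioi M, 1 / (κ * G u + K u - 2 * l₁ * u) := by
  set F : ℝ → ℝ := fun u => κ * G u + K u - 2 * l₁ * u with hF
  set f : ℝ → ℝ := fun u => 1 / (κ * G u + K u - 2 * l₁ * u) with hf
  have hIoisub : Set.Ioi M ⊆ Set.Ici (0:ℝ) := fun x hx => le_of_lt (lt_trans hM hx)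
  have hFpos : ∀ u ∈ Set.Ioi M, 0 < F u := by
    intro u hu
    have := hgrow u hu
    simp only [hF]; linarith
  have hfpos : ∀ u ∈ Set.Ioi M, 0 < f u := by
    intro u hu
    exact div_pos one_pos (hFpos u hu)
  have hFcont : ContinuousOn F (Set.Ioi M) := by
    apply ContinuousOn.sub
    · exact ((hGc.mono hIoisub).const_smul κ |>.add (hKc.mono hIoisub))
    · exact (continuous_const.mul continuous_id).continuousOn
  have hfcont : ContinuousOn f (Set.Ioi M) :=
    continuousOn_const.div hFcont (fun u hu => (hFpos u hu).ne')
  -- η stays above M on [0, T]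
  have hstay : ∀ t ∈ Set.Icc (0:ℝ) T, M < η t := by
    by_contra h
    push_neg at h
    obtain ⟨t₀, ht₀, hηt₀⟩ := h
    set S : Set ℝ := Set.Icc 0 T ∩ η ⁻¹' Set.Iic M with hS
    have hScl : IsClosed S := by
      apply ContinuousOn.preimage_isClosed_of_isClosed _ isClosed_Icc isClosed_Iic
      exact fun t ht => ((hderiv t ht).continuousAt).continuousWithinAt
    have hSne : S.Nonempty := ⟨t₀, ht₀, hηt₀⟩
    have hSbdd : BddBelow S := ⟨0, fun x hx => hx.1.1⟩
    set s := sInf S with hs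
    have hsS : s ∈ S := hScl.csInf_mem hSne hSbdd
    have hsIcc : s ∈ Set.Icc 0 T := hsS.1
    have hs0 : 0 < s := by
      rcases lt_or_eq_of_le hsIcc.1 with h | h
      · exact h
      · exact absurd hsS.2 (by simp [← h] at *; linarith [hη0])
    have hlt : ∀ x ∈ Set.Ico (0:ℝ) s, M < η x := by
      intro x hx
      by_contra hxle
      push_neg at hxle
      have : x ∈ S := ⟨⟨hx.1, le_trans hx.2.le hsIcc.2⟩, hxle⟩
      exact absurd (csInf_le hSbdd this) (not_le.2 hx.2)
    have hmono : StrictMonoOn η (Set.Icc 0 s) := by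
      apply strictMonoOn_of_deriv_pos (convex_Icc 0 s)
      · intro t ht
        exact ((hderiv t ⟨ht.1, le_trans ht.2 hsIcc.2⟩).continuousAt).continuousWithinAt
      · intro t ht
        rw [interior_Icc] at ht
        have htT : t ∈ Set.Icc 0 T := ⟨ht.1.le, le_trans ht.2.le hsIcc.2⟩
        rw [(hderiv t htT).deriv]
        have hMη : M < η t := hlt t ⟨ht.1.le, ht.2⟩
        have := hineq t htT
        have := hgrow (η t) hMη
        linarith
    have : η 0 < η s := hmono ⟨le_refl 0, hs0.le⟩ ⟨hs0.le, le_refl s⟩ hs0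
    have : η s ≤ M := hsS.2
    linarith
  -- The antiderivative
  set Φ : ℝ → ℝ := fun x => ∫ u in M..x, f u with hΦ
  have hΦint : ∀ x : ℝ, M ≤ x → IntervalIntegrable f volume M x := by
    intro x hx
    rw [intervalIntegrable_iff_integrableOn_Ioc_of_le hx]
    exact hint.mono_set Set.Ioc_subset_Ioi_self
  have hΦderiv : ∀ x ∈ Set.Ioi M, HasDerivAt Φ (f x) x := by
    intro x hx
    apply intervalIntegral.integral_hasDerivAt_right (hΦint x hx.le)
    · exact ContinuousOn.stronglyMeasurableAtFilter isOpen_Ioi hfcont x hx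
    · exact hfcont.continuousAt (isOpen_Ioi.mem_nhds hx)
  -- the composite ψ t = Φ (η t) - t has nonneg derivative
  set ψ : ℝ → ℝ := fun t => Φ (η t) - t with hψ
  have hψderiv : ∀ t ∈ Set.Icc (0:ℝ) T, HasDerivAt ψ (f (η t) * η' t - 1) t := by
    intro t ht
    exact ((hΦderiv (η t) (hstay t ht)).comp t (hderiv t ht)).sub (hasDerivAt_id t)
  have hψnn : ∀ t ∈ Set.Icc (0:ℝ) T, 0 ≤ f (η t) * η' t - 1 := by
    intro t ht
    have hη : η t ∈ Set.Ioi M := hstay t ht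
    have hFp := hFpos (η t) hη
    have h1 : F (η t) ≤ η' t := by
      have := hineq t ht; simp only [hF]; linarith
    have : (1:ℝ) ≤ f (η t) * η' t := by
      show (1:ℝ) ≤ 1 / (κ * G (η t) + K (η t) - 2 * l₁ * η t) * η' t
      rw [one_div, inv_mul_eq_div, le_div_iff₀ hFp]
      simpa [hF] using h1
    linarith
  have hψmono : MonotoneOn ψ (Set.Icc 0 T) := by
    apply monotoneOn_of_deriv_nonneg (convex_Icc 0 T)
    · intro t ht
      exact (hψderiv t ht).continuousAt.continuousWithinAt
    · intro t ht
      rw [interior_Icc] at ht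
      exact ((hψderiv t (Set.Ioo_subset_Icc_self ht)).differentiableAt).differentiableWithinAt
    · intro t ht
      rw [interior_Icc] at ht
      have ht' : t ∈ Set.Icc (0:ℝ) T := Set.Ioo_subset_Icc_self ht
      rw [(hψderiv t ht').deriv]
      exact hψnn t ht'
  have hψ0T : ψ 0 ≤ ψ T :=
    hψmono ⟨le_refl 0, hT.le⟩ ⟨hT.le, le_refl T⟩ hT.le
  -- Φ (η 0) ≥ 0
  have hΦ0 : 0 ≤ Φ (η 0) := by
    show (0:ℝ) ≤ ∫ u in M..(η 0), f u
    rw [intervalIntegral.integral_of_le hη0.le]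
    apply setIntegral_nonneg measurableSet_Ioc
    intro u hu
    exact (hfpos u hu.1).le
  -- Φ (η T) ≤ ∫ over Ioi M
  have hΦT : Φ (η T) ≤ ∫ u in Set.Ioi M, f u := by
    have hηT : M < η T := hstay T ⟨hT.le, le_refl T⟩
    show (∫ u in M..(η T), f u) ≤ ∫ u in Set.Ioi M, f u
    rw [intervalIntegral.integral_of_le hηT.le]
    apply setIntegral_mono_set hint
    · filter_upwards [ae_restrict_mem measurableSet_Ioi] with u hu
      exact (hfpos u hu).le
    · exact HasSubset.Subset.eventuallyLE Set.Ioc_subset_Ioi_self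
  have : Φ (η 0) - 0 ≤ Φ (η T) - T := hψ0T
  linarith
end
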